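/- Let c^i_{jk} be smooth structure functions on an open set U ⊆ ℝ^n, symmetric in (j,k), associative, and satisfying ∂_l c^i_{jk} = ∂_j c^i_{lk} for all indices (i.e. the symmetry condition in flat coordinates with Γ = 0). Suppose X, Y, A, B are smooth vector fields with ∂_j X^i = c^i_{jk} A^k and ∂_j Y^i = c^i_{jk} B^k for all i,j. Then (Lie_X c)^i_{pq} Y^q − (Lie_Y c)^i_{pq} X^q + c^i_{pq} [X,Y]^q = 0 for all i,p; in particular the corresponding flows of the principal hierarchy commute. -/
import Mathlib


open scoped BigOperators

noncomputable section

/-- Vector fields on (an open subset of) `ℝⁿ`, given by their components. -/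
abbrev VF (n : ℕ) := Fin n → (Fin n → ℝ) → ℝ

/-- Structure functions `c^i_{jk}` (and also Christoffel symbols `Γ^i_{jk}`). -/
abbrev SC (n : ℕ) := Fin n → Fin n → Fin n → (Fin n → ℝ) → ℝ

/-- Partial derivative `∂_j f` at `x`. -/
def pd {n : ℕ} (f : (Fin n → ℝ) → ℝ) (j : Fin n) (x : Fin n → ℝ) : ℝ :=
  fderiv ℝ f x (Pi.single j 1)

/-- The Lie bracket `[X,Y]^i = X^j ∂_j Y^i − Y^j ∂_j X^i`. -/
def lieB {n : ℕ} (X Y : VF n) : VF n :=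
  fun i x => ∑ j, (X j x * pd (Y i) j x - Y j x * pd (X i) j x)

/-- The Lie derivative of `c` along `X`:
`(Lie_X c)^i_{jk} = X^s ∂_s c^i_{jk} − (∂_s X^i) c^s_{jk} + (∂_j X^s) c^i_{sk} + (∂_k X^s) c^i_{js}`. -/
def liec {n : ℕ} (c : SC n) (X : VF n) (i j k : Fin n) (x : Fin n → ℝ) : ℝ :=
  ∑ s, (X s x * pd (c i j k) s x - pd (X i) s x * c s j k x
    + pd (X s) j x * c i s k x + pd (X s) k x * c i j s x)


lemma alg {n : ℕ} (i p : Fin n)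
    (cc : Fin n → Fin n → Fin n → ℝ) (dd : Fin n → Fin n → ℝ)
    (Xv Yv Av Bv : Fin n → ℝ)
    (comm : ∀ a b d, cc a b d = cc a d b)
    (assoc : ∀ a b d e, ∑ m, cc a b m * cc m d e = ∑ m, cc a d m * cc m b e)
    (ddsym : ∀ a b, dd a b = dd b a) :
    ∑ q, (∑ s, (Xv s * dd q s - (∑ k, cc i s k * Av k) * cc s p q
        + (∑ k, cc s p k * Av k) * cc i s q + (∑ k, cc s q k * Av k) * cc i p s)) * Yv q
      - ∑ q, (∑ s, (Yv s * dd q s - (∑ k, cc i s k * Bv k) * cc s p q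
        + (∑ k, cc s p k * Bv k) * cc i s q + (∑ k, cc s q k * Bv k) * cc i p s)) * Xv q
      + ∑ q, cc i p q * (∑ j, (Xv j * (∑ k, cc q j k * Bv k)
        - Yv j * (∑ k, cc q j k * Av k))) = 0 := by
  have hD : (∑ q, ∑ s, Xv s * dd q s * Yv q) = ∑ q, ∑ s, Yv s * dd q s * Xv q := by
    rw [Finset.sum_comm]
    exact Finset.sum_congr rfl fun q _ => Finset.sum_congr rfl fun s _ => by
      rw [ddsym]; ring
  have hA2 : ∀ (Av W : Fin n → ℝ),
      (∑ q, ∑ s, (∑ k, cc i s k * Av k) * cc s p q * W q)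
        = ∑ q, ∑ s, (∑ k, cc s p k * Av k) * cc i s q * W q := by
    intro Av W
    have L : ∀ q, (∑ s, (∑ k, cc i s k * Av k) * cc s p q * W q)
        = ∑ k, (∑ s, cc i p s * cc s k q) * (Av k * W q) := by
      intro q
      calc (∑ s, (∑ k, cc i s k * Av k) * cc s p q * W q)
          = ∑ s, ∑ k, (cc i k s * cc s p q) * (Av k * W q) := by
            refine Finset.sum_congr rfl fun s _ => ?_
            rw [Finset.sum_mul, Finset.sum_mul]
            exact Finset.sum_congr rfl fun k _ => by rw [comm i s k]; ring
        _ = ∑ k, ∑ s, (cc i k s * cc s p q) * (Av k * W q) := Finset.sum_comm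
        _ = ∑ k, (∑ s, cc i k s * cc s p q) * (Av k * W q) := by
            exact Finset.sum_congr rfl fun k _ => (Finset.sum_mul _ _ _).symm
        _ = ∑ k, (∑ s, cc i p s * cc s k q) * (Av k * W q) := by
            exact Finset.sum_congr rfl fun k _ => by rw [assoc i k p q]
    have R : ∀ q, (∑ s, (∑ k, cc s p k * Av k) * cc i s q * W q)
        = ∑ k, (∑ s, cc i p s * cc s k q) * (Av k * W q) := by
      intro q
      calc (∑ s, (∑ k, cc s p k * Av k) * cc i s q * W q)
          = ∑ s, ∑ k, (cc i q s * cc s p k) * (Av k * W q) := by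
            refine Finset.sum_congr rfl fun s _ => ?_
            rw [Finset.sum_mul, Finset.sum_mul]
            exact Finset.sum_congr rfl fun k _ => by rw [comm i s q]; ring
        _ = ∑ k, ∑ s, (cc i q s * cc s p k) * (Av k * W q) := Finset.sum_comm
        _ = ∑ k, (∑ s, cc i q s * cc s p k) * (Av k * W q) := by
            exact Finset.sum_congr rfl fun k _ => (Finset.sum_mul _ _ _).symm
        _ = ∑ k, (∑ s, cc i p s * cc s k q) * (Av k * W q) := by
            refine Finset.sum_congr rfl fun k _ => ?_
            rw [assoc i q p k]
            congr 1
            exact Finset.sum_congr rfl fun s _ => by rw [comm s q k]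
    exact Finset.sum_congr rfl fun q _ => (L q).trans (R q).symm
  have hBr : ∀ (Av W : Fin n → ℝ),
      (∑ q, ∑ s, (∑ k, cc s q k * Av k) * cc i p s * W q)
        = ∑ q, cc i p q * (∑ j, W j * (∑ k, cc q j k * Av k)) := by
    intro Av W
    rw [Finset.sum_comm]
    refine Finset.sum_congr rfl fun q _ => ?_
    rw [Finset.mul_sum]
    refine Finset.sum_congr rfl fun j _ => ?_
    rw [Finset.sum_mul, Finset.sum_mul, Finset.mul_sum, Finset.mul_sum]
    exact Finset.sum_congr rfl fun k _ => by ring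
  -- expand the goal
  have expand : ∀ (W V P Q : Fin n → ℝ),
      (∑ q, (∑ s, (W s * dd q s - (∑ k, cc i s k * P k) * cc s p q
          + (∑ k, cc s p k * P k) * cc i s q + (∑ k, cc s q k * P k) * cc i p s)) * V q)
        = (∑ q, ∑ s, W s * dd q s * V q)
          - (∑ q, ∑ s, (∑ k, cc i s k * P k) * cc s p q * V q)
          + (∑ q, ∑ s, (∑ k, cc s p k * P k) * cc i s q * V q)
          + (∑ q, ∑ s, (∑ k, cc s q k * P k) * cc i p s * V q) := by
    intro W V P Q
    rw [← Finset.sum_sub_distrib, ← Finset.sum_add_distrib, ← Finset.sum_add_distrib]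
    refine Finset.sum_congr rfl fun q _ => ?_
    rw [Finset.sum_mul, ← Finset.sum_sub_distrib, ← Finset.sum_add_distrib,
      ← Finset.sum_add_distrib]
    exact Finset.sum_congr rfl fun s _ => by ring
  have expandC :
      (∑ q, cc i p q * (∑ j, (Xv j * (∑ k, cc q j k * Bv k)
          - Yv j * (∑ k, cc q j k * Av k))))
        = (∑ q, cc i p q * (∑ j, Xv j * (∑ k, cc q j k * Bv k)))
          - (∑ q, cc i p q * (∑ j, Yv j * (∑ k, cc q j k * Av k))) := by
    rw [← Finset.sum_sub_distrib]
    refine Finset.sum_congr rfl fun q _ => ?_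
    rw [← mul_sub, ← Finset.sum_sub_distrib]
  rw [expand Xv Yv Av Av, expand Yv Xv Bv Bv, expandC,
    ← hBr Av Yv, ← hBr Bv Xv, hA2 Av Yv, hA2 Bv Xv, hD]
  ring


lemma pd_congr {n : ℕ} {f g : (Fin n → ℝ) → ℝ} {U : Set (Fin n → ℝ)} (hU : IsOpen U)
    {x : Fin n → ℝ} (hx : x ∈ U) (h : ∀ y ∈ U, f y = g y) (j : Fin n) :
    pd f j x = pd g j x := by
  unfold pd
  rw [Filter.EventuallyEq.fderiv_eq (Filter.eventuallyEq_of_mem (hU.mem_nhds hx) h)]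

theorem statement_9 {n : ℕ} (U : Set (Fin n → ℝ)) (hU : IsOpen U)
    (c : SC n)
    (hc_smooth : ∀ i j k, ContDiffOn ℝ (⊤ : ℕ∞) (c i j k) U)
    (hc_comm : ∀ i j k, ∀ x ∈ U, c i j k x = c i k j x)
    (hc_assoc : ∀ i j k l, ∀ x ∈ U,
      ∑ m, c i j m x * c m k l x = ∑ m, c i k m x * c m j l x)
    (hsym : ∀ i j k l, ∀ x ∈ U, pd (c i j k) l x = pd (c i l k) j x)
    (X : VF n) (hX : ∀ i, ContDiffOn ℝ (⊤ : ℕ∞) (X i) U)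
    (Y : VF n) (hY : ∀ i, ContDiffOn ℝ (⊤ : ℕ∞) (Y i) U)
    (A : VF n) (hA : ∀ i, ContDiffOn ℝ (⊤ : ℕ∞) (A i) U)
    (B : VF n) (hB : ∀ i, ContDiffOn ℝ (⊤ : ℕ∞) (B i) U)
    (hXrec : ∀ i j, ∀ x ∈ U, pd (X i) j x = ∑ k, c i j k x * A k x)
    (hYrec : ∀ i j, ∀ x ∈ U, pd (Y i) j x = ∑ k, c i j k x * B k x) :
    ∀ x ∈ U, ∀ i p,
      ∑ q, liec c X i p q x * Y q x - ∑ q, liec c Y i p q x * X q x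
        + ∑ q, c i p q x * lieB X Y q x = 0 := by
  intro x hx i p
  have ddsym : ∀ a b : Fin n, pd (c i p a) b x = pd (c i p b) a x := by
    intro a b
    rw [hsym i p a b x hx, hsym i p b a x hx]
    exact pd_congr hU hx (fun y hy => hc_comm i b a y hy) p
  have hLX : ∀ q, liec c X i p q x
      = ∑ s, ((fun a => X a x) s * (fun a b => pd (c i p a) b x) q s
        - (∑ k, c i s k x * A k x) * c s p q x
        + (∑ k, c s p k x * A k x) * c i s q x
        + (∑ k, c s q k x * A k x) * c i p s x) := by
    intro q
    unfold liec
    refine Finset.sum_congr rfl fun s _ => ?_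
    rw [hXrec i s x hx, hXrec s p x hx, hXrec s q x hx]
  have hLY : ∀ q, liec c Y i p q x
      = ∑ s, ((fun a => Y a x) s * (fun a b => pd (c i p a) b x) q s
        - (∑ k, c i s k x * B k x) * c s p q x
        + (∑ k, c s p k x * B k x) * c i s q x
        + (∑ k, c s q k x * B k x) * c i p s x) := by
    intro q
    unfold liec
    refine Finset.sum_congr rfl fun s _ => ?_
    rw [hYrec i s x hx, hYrec s p x hx, hYrec s q x hx]
  have hLB : ∀ q, lieB X Y q x
      = ∑ j, ((fun a => X a x) j * (∑ k, c q j k x * B k x)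
        - (fun a => Y a x) j * (∑ k, c q j k x * A k x)) := by
    intro q
    unfold lieB
    refine Finset.sum_congr rfl fun j _ => ?_
    rw [hXrec q j x hx, hYrec q j x hx]
  calc ∑ q, liec c X i p q x * Y q x - ∑ q, liec c Y i p q x * X q x
        + ∑ q, c i p q x * lieB X Y q x
      = ∑ q, (∑ s, ((fun a => X a x) s * (fun a b => pd (c i p a) b x) q s
            - (∑ k, (fun a b d => c a b d x) i s k * (fun a => A a x) k) * (fun a b d => c a b d x) s p q
            + (∑ k, (fun a b d => c a b d x) s p k * (fun a => A a x) k) * (fun a b d => c a b d x) i s q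
            + (∑ k, (fun a b d => c a b d x) s q k * (fun a => A a x) k) * (fun a b d => c a b d x) i p s)) * (fun a => Y a x) q
        - ∑ q, (∑ s, ((fun a => Y a x) s * (fun a b => pd (c i p a) b x) q s
            - (∑ k, (fun a b d => c a b d x) i s k * (fun a => B a x) k) * (fun a b d => c a b d x) s p q
            + (∑ k, (fun a b d => c a b d x) s p k * (fun a => B a x) k) * (fun a b d => c a b d x) i s q
            + (∑ k, (fun a b d => c a b d x) s q k * (fun a => B a x) k) * (fun a b d => c a b d x) i p s)) * (fun a => X a x) q
        + ∑ q, (fun a b d => c a b d x) i p q * (∑ j, ((fun a => X a x) j * (∑ k, (fun a b d => c a b d x) q j k * (fun a => B a x) k)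
            - (fun a => Y a x) j * (∑ k, (fun a b d => c a b d x) q j k * (fun a => A a x) k))) := by
        simp only
        congr 1
        · congr 1
          · exact Finset.sum_congr rfl fun q _ => by rw [hLX q]
          · exact Finset.sum_congr rfl fun q _ => by rw [hLY q]
        · exact Finset.sum_congr rfl fun q _ => by rw [hLB q]
    _ = 0 := by
        apply alg i p (fun a b d => c a b d x) (fun a b => pd (c i p a) b x)
          (fun a => X a x) (fun a => Y a x) (fun a => A a x) (fun a => B a x)
        · exact fun a b d => hc_comm a b d x hx
        · exact fun a b d e => hc_assoc a b d e x hx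
        · exact ddsym
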